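/- arXiv:1702.01679 — 2 statements merged into one kernel-verified Lean document; each statement's English description precedes it below -/
import Mathlib

section
/- Let $X \sim$ Gamma$(N, 1)$ with $N \in \mathbb{N}_{\ge 1}$ and let $I \ge 0$ be an independent nonnegative random variable with Laplace transform $\mathcal{L}_I(s) = \mathbb{E}[e^{-sI}]$ finite and $N-1$ times differentiable on $(0,\infty)$. Then for every $s > 0$, $\mathbb{P}(X > sI) = \sum_{n=0}^{N-1} \frac{s^n(-1)^n}{n!} \mathcal{L}_I^{(n)}(s)$, where $\mathcal{L}_I^{(n)}$ denotes the $n$-th derivative. -/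
/-!
The tail of `Gamma(N, 1)` is `P(X > t) = exp (-t) ∑_{n < N} t ^ n / n!`, because the derivative
of the right-hand side telescopes to minus the density. Conditioning on `I` through independence
gives `P(X > s I) = E[exp (-s I) ∑_{n < N} (s I) ^ n / n!]`, and `E[(-I) ^ n exp (-s I)]` is the
`n`-th derivative of the Laplace transform at `s > 0`: differentiation under the expectation is
justified by the domination `I ^ n exp (-s I) ≤ n! / (s - c) ^ n * exp (-c I)` for `0 < c < s`.
-/

open MeasureTheory ProbabilityTheory Real

open Set Filter Finset Topology
open scoped Nat

theorem hasDerivAt_exp_neg_mul_sum_range_pow_div_factorial (n : ℕ) (x : ℝ) :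
    HasDerivAt (fun y => exp (-y) * ∑ k ∈ range (n + 1), y ^ k / k !)
      (-(exp (-x) * x ^ n / n !)) x := by
  have hexp : HasDerivAt (fun y => exp (-y)) (-exp (-x)) x := by
    simpa using (hasDerivAt_neg x).exp
  induction n with
  | zero => simpa using hexp
  | succ n ih =>
    have hpow : HasDerivAt (fun y : ℝ => y ^ (n + 1) / ((n + 1)! : ℝ)) (x ^ n / n !) x := by
      refine (hasDerivAt_pow (n + 1) x).div_const _ |>.congr_deriv ?_
      rw [Nat.factorial_succ]; push_cast; field_simp
    simp only [sum_range_succ _ (n + 1), mul_add]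
    exact (ih.add (hexp.mul hpow)).congr_deriv (by ring)

theorem tendsto_exp_neg_mul_sum_range_pow_div_factorial (n : ℕ) :
    Tendsto (fun y => exp (-y) * ∑ k ∈ range (n + 1), y ^ k / k !) atTop (𝓝 0) := by
  simp only [mul_sum]
  simpa using tendsto_finsetSum (range (n + 1)) fun k _ =>
    ((tendsto_pow_mul_exp_neg_atTop_nhds_zero k).div_const (k ! : ℝ)).congr
      fun y => by ring

theorem gammaPDF_natCast_add_one {n : ℕ} {r x : ℝ} (hx : 0 ≤ x) :
    gammaPDF (n + 1 : ℕ) r x = ENNReal.ofReal (r * (exp (-(r * x)) * (r * x) ^ n / n !)) := by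
  rw [gammaPDF_of_nonneg hx, Nat.cast_add_one, Real.Gamma_nat_eq_factorial, add_sub_cancel_right,
    ← Nat.cast_add_one, rpow_natCast, rpow_natCast]
  ring_nf

theorem gammaMeasure_natCast_add_one_Ioi (n : ℕ) {r t : ℝ} (hr : 0 < r) (ht : 0 ≤ t) :
    gammaMeasure (n + 1 : ℕ) r (Ioi t) =
      ENNReal.ofReal (exp (-(r * t)) * ∑ k ∈ range (n + 1), (r * t) ^ k / k !) := by
  set F := fun y => exp (-y) * ∑ k ∈ range (n + 1), y ^ k / (k ! : ℝ)
  have hderiv : ∀ x ∈ Ici t, HasDerivAt (fun x => -F (r * x))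
      (r * (exp (-(r * x)) * (r * x) ^ n / n !)) x := fun x _ => by
    have := ((hasDerivAt_exp_neg_mul_sum_range_pow_div_factorial n (r * x)).comp x
      ((hasDerivAt_id' x).const_mul r)).neg
    exact this.congr_deriv (by ring)
  have hnonneg : ∀ x ∈ Ioi t, 0 ≤ r * (exp (-(r * x)) * (r * x) ^ n / n !) := fun x hx => by
    have : 0 ≤ x := ht.trans hx.le
    positivity
  have htendsto : Tendsto (fun x => -F (r * x)) atTop (𝓝 0) := by
    simpa using ((tendsto_exp_neg_mul_sum_range_pow_div_factorial n).comp
      (tendsto_id.const_mul_atTop hr)).neg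
  rw [gammaMeasure, withDensity_apply _ measurableSet_Ioi,
    setLIntegral_congr_fun measurableSet_Ioi fun x hx => gammaPDF_natCast_add_one (ht.trans hx.le),
    ← ofReal_integral_eq_lintegral_ofReal (integrableOn_Ioi_deriv_of_nonneg' hderiv hnonneg htendsto)
      ((ae_restrict_iff' measurableSet_Ioi).2 (ae_of_all _ hnonneg)),
    integral_Ioi_of_hasDerivAt_of_nonneg' hderiv hnonneg htendsto]
  simp [F]

theorem measure_lt_eq_lintegral_map_Ioi {Ω : Type*} [MeasurableSpace Ω] {μ : Measure Ω}
    [IsFiniteMeasure μ] {X Y : Ω → ℝ} (hX : Measurable X) (hY : Measurable Y)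
    (hXY : IndepFun X Y μ) :
    μ {ω | Y ω < X ω} = ∫⁻ ω, μ.map X (Ioi (Y ω)) ∂μ := by
  have hlt : MeasurableSet {p : ℝ × ℝ | p.1 < p.2} := measurableSet_lt measurable_fst measurable_snd
  have hanti : Antitone fun t => μ.map X (Ioi t) := fun _ _ h => measure_mono (Ioi_subset_Ioi h)
  calc μ {ω | Y ω < X ω} = μ.map (fun ω => (Y ω, X ω)) {p | p.1 < p.2} :=
        (Measure.map_apply (hY.prodMk hX) hlt).symm
    _ = ∫⁻ y, μ.map X (Ioi y) ∂μ.map Y := by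
        rw [hXY.symm.map_prod_eq_prod_map_map hY.aemeasurable hX.aemeasurable,
          Measure.prod_apply hlt]
        rfl
    _ = ∫⁻ ω, μ.map X (Ioi (Y ω)) ∂μ := lintegral_map hanti.measurable hY

theorem pow_mul_exp_neg_le_factorial {x : ℝ} (hx : 0 ≤ x) (k : ℕ) : x ^ k * exp (-x) ≤ k ! := by
  have h := pow_div_factorial_le_exp x hx k
  rw [div_le_iff₀ (by positivity)] at h
  rw [exp_neg, ← div_eq_mul_inv, div_le_iff₀ (exp_pos x)]
  linarith

section Laplace

variable {Ω : Type*} [MeasurableSpace Ω] {μ : Measure Ω} {I : Ω → ℝ}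

theorem integrable_neg_pow_mul_exp_neg_mul (hI : Measurable I) (hInn : ∀ ω, 0 ≤ I ω) {c s : ℝ}
    (hc : Integrable (fun ω => exp (-c * I ω)) μ) (hcs : c < s) (k : ℕ) :
    Integrable (fun ω => (-I ω) ^ k * exp (-s * I ω)) μ := by
  refine (hc.const_mul (k ! / (s - c) ^ k)).mono' (by fun_prop) (ae_of_all _ fun ω => ?_)
  have hsc : 0 < s - c := sub_pos.2 hcs
  have hbound := pow_mul_exp_neg_le_factorial (mul_nonneg hsc.le (hInn ω)) k
  rw [norm_mul, norm_pow, norm_neg, norm_of_nonneg (hInn ω), norm_of_nonneg (exp_pos _).le]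
  calc I ω ^ k * exp (-s * I ω)
      = ((s - c) * I ω) ^ k * exp (-((s - c) * I ω)) / (s - c) ^ k * exp (-c * I ω) := by
        rw [show -s * I ω = -((s - c) * I ω) + -c * I ω by ring, exp_add, mul_pow]
        field_simp
    _ ≤ k ! / (s - c) ^ k * exp (-c * I ω) := by gcongr

theorem hasDerivAt_integral_neg_pow_mul_exp_neg_mul (hI : Measurable I) (hInn : ∀ ω, 0 ≤ I ω)
    (hLint : ∀ s : ℝ, 0 < s → Integrable (fun ω => exp (-s * I ω)) μ) (n : ℕ) {s : ℝ}
    (hs : 0 < s) :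
    HasDerivAt (fun u => ∫ ω, (-I ω) ^ n * exp (-u * I ω) ∂μ)
      (∫ ω, (-I ω) ^ (n + 1) * exp (-s * I ω) ∂μ) s := by
  have hbound_int : Integrable (fun ω => (-I ω) ^ (n + 1) * exp (-(s / 2) * I ω)) μ :=
    integrable_neg_pow_mul_exp_neg_mul hI hInn (hLint (s / 4) (by positivity)) (by linarith) _
  refine (hasDerivAt_integral_of_dominated_loc_of_deriv_le
    (F := fun u ω => (-I ω) ^ n * exp (-u * I ω))
    (F' := fun u ω => (-I ω) ^ (n + 1) * exp (-u * I ω)) (Ioi_mem_nhds (half_lt_self hs))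
    (Eventually.of_forall fun u => by fun_prop)
    (integrable_neg_pow_mul_exp_neg_mul hI hInn (hLint (s / 2) (by positivity)) (by linarith) n)
    (by fun_prop) (ae_of_all _ fun ω u hu => ?_) hbound_int.norm
    (ae_of_all _ fun ω u _ => ?_)).2
  · simp only [norm_mul, norm_pow, norm_neg, norm_of_nonneg (exp_pos _).le]
    gcongr
    exacts [hInn ω, le_of_lt hu]
  · have hexp : HasDerivAt (fun u => exp (-u * I ω)) (-I ω * exp (-u * I ω)) u := by
      simpa [mul_comm] using ((hasDerivAt_id' u).neg.mul_const (I ω)).exp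
    exact (hexp.const_mul ((-I ω) ^ n)).congr_deriv (by ring)

theorem iteratedDerivWithin_integral_exp_neg_mul (hI : Measurable I) (hInn : ∀ ω, 0 ≤ I ω)
    (hLint : ∀ s : ℝ, 0 < s → Integrable (fun ω => exp (-s * I ω)) μ) (n : ℕ) {s : ℝ}
    (hs : 0 < s) :
    iteratedDerivWithin n (fun u => ∫ ω, exp (-u * I ω) ∂μ) (Ioi 0) s =
      ∫ ω, (-I ω) ^ n * exp (-s * I ω) ∂μ := by
  induction n generalizing s with
  | zero => simp
  | succ n ih =>
    have hnhds : iteratedDerivWithin n (fun u => ∫ ω, exp (-u * I ω) ∂μ) (Ioi 0) =ᶠ[𝓝 s]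
        fun u => ∫ ω, (-I ω) ^ n * exp (-u * I ω) ∂μ :=
      eventually_of_mem (Ioi_mem_nhds hs) fun u hu => ih hu
    rw [iteratedDerivWithin_succ, derivWithin_of_isOpen isOpen_Ioi hs, hnhds.deriv_eq]
    exact (hasDerivAt_integral_neg_pow_mul_exp_neg_mul hI hInn hLint n hs).deriv

end Laplace

theorem gamma_coverage_alternating_sum_general
    {Ω : Type*} [MeasureSpace Ω] [IsProbabilityMeasure (ℙ : Measure Ω)]
    (N : ℕ) (hN : 1 ≤ N) (X I : Ω → ℝ)
    (hX : Measurable X) (hI : Measurable I)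
    (hXlaw : Measure.map X ℙ = gammaMeasure N 1)
    (hInn : ∀ ω, 0 ≤ I ω)
    (hindep : IndepFun X I)
    (L : ℝ → ℝ) (hL : L = fun s => ∫ ω, Real.exp (-s * I ω))
    (hLint : ∀ s : ℝ, 0 < s → Integrable (fun ω => Real.exp (-s * I ω))) :
    ∀ s : ℝ, 0 < s →
      (ℙ {ω | s * I ω < X ω}).toReal =
        ∑ n ∈ Finset.range N,
          s ^ n * (-1 : ℝ) ^ n / (Nat.factorial n) *
            iteratedDerivWithin n L (Set.Ioi 0) s := by
  obtain ⟨N, rfl⟩ := Nat.exists_eq_add_of_le' hN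
  subst hL
  intro s hs
  have hsI (ω : Ω) : 0 ≤ s * I ω := mul_nonneg hs.le (hInn ω)
  have hterm (n : ℕ) : Integrable (fun ω => (-I ω) ^ n * exp (-s * I ω)) :=
    integrable_neg_pow_mul_exp_neg_mul hI hInn (hLint (s / 2) (by positivity)) (by linarith) n
  have hexpand (ω : Ω) : exp (-(s * I ω)) * ∑ n ∈ range (N + 1), (s * I ω) ^ n / n ! =
      ∑ n ∈ range (N + 1), s ^ n * (-1) ^ n / n ! * ((-I ω) ^ n * exp (-s * I ω)) := by
    rw [mul_sum]
    refine sum_congr rfl fun n _ => ?_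
    have hsign : ((-1 : ℝ) ^ n) ^ 2 = 1 := by rw [← pow_mul, pow_mul', neg_one_sq, one_pow]
    rw [neg_pow (I ω), neg_mul]
    linear_combination (-(s ^ n * I ω ^ n * exp (-(s * I ω)) / n !)) * hsign
  calc (ℙ {ω | s * I ω < X ω}).toReal
      = (∫⁻ ω, ENNReal.ofReal (exp (-(s * I ω)) *
          ∑ n ∈ range (N + 1), (s * I ω) ^ n / n !)).toReal := by
        rw [measure_lt_eq_lintegral_map_Ioi hX (hI.const_mul s) (hindep.comp measurable_id
          (measurable_const_mul s)), hXlaw]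
        simp only [gammaMeasure_natCast_add_one_Ioi N one_pos (hsI _), one_mul]
    _ = ∫ ω, ∑ n ∈ range (N + 1), s ^ n * (-1) ^ n / n ! * ((-I ω) ^ n * exp (-s * I ω)) := by
        rw [← integral_eq_lintegral_of_nonneg_ae (ae_of_all _ fun ω => by have := hsI ω; positivity)
          (by fun_prop)]
        simp only [hexpand]
    _ = _ := by
        rw [integral_finsetSum _ fun n _ => (hterm n).const_mul _]
        refine sum_congr rfl fun n _ => ?_
        rw [integral_const_mul, iteratedDerivWithin_integral_exp_neg_mul hI hInn hLint n hs]

theorem gamma_coverage_alternating_sum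
    {Ω : Type*} [MeasureSpace Ω] [IsProbabilityMeasure (ℙ : Measure Ω)]
    (N : ℕ) (hN : 1 ≤ N) (X I : Ω → ℝ)
    (hX : Measurable X) (hI : Measurable I)
    (hXlaw : Measure.map X ℙ = gammaMeasure N 1)
    (hInn : ∀ ω, 0 ≤ I ω)
    (hindep : IndepFun X I)
    (L : ℝ → ℝ) (hL : L = fun s => ∫ ω, Real.exp (-s * I ω))
    (hLint : ∀ s : ℝ, 0 < s → Integrable (fun ω => Real.exp (-s * I ω)))
    (hLdiff : ContDiffOn ℝ (N - 1 : ℕ) L (Set.Ioi 0)) :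
    ∀ s : ℝ, 0 < s →
      (ℙ {ω | s * I ω < X ω}).toReal =
        ∑ n ∈ Finset.range N,
          s ^ n * (-1 : ℝ) ^ n / (Nat.factorial n) *
            iteratedDerivWithin n L (Set.Ioi 0) s :=
  gamma_coverage_alternating_sum_general N hN X I hX hI hXlaw hInn hindep L hL hLint
end

section
/- For $\tau > 0$, $\alpha > 2$, $\lambda > 0$, and $s = x^\alpha$ with $x > 0$, define $\mathcal{L}(x) = \exp\left(-\frac{2\pi\tau \lambda x^2}{\alpha - 2}\, {}_2F_1\!\left(1, 1-\tfrac{2}{\alpha}; 2-\tfrac{2}{\alpha}; -\tau\right)\right)$. Then $2\pi\lambda \int_0^{\infty} x\, e^{-\pi\lambda x^2}\, \mathcal{L}(x)\, dx = \frac{1}{1 + \frac{2\tau}{\alpha-2}\, {}_2F_1\!\left(1, 1-\tfrac{2}{\alpha}; 2-\tfrac{2}{\alpha}; -\tau\right)}$. -/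
open MeasureTheory Real

/-- The Gauss hypergeometric function ₂F₁(a,b;c;x), defined by its power series. -/
noncomputable def hyp2F1 (a b c x : ℝ) : ℝ :=
  ∑' n : ℕ, ((ascPochhammer ℝ n).eval a * (ascPochhammer ℝ n).eval b /
    (ascPochhammer ℝ n).eval c) * x ^ n / (Nat.factorial n)

/-! With `b = 1 - 2/α`, the hypergeometric factor is `F = ∑ b/(b+n) (-τ)ⁿ`, an alternating
series with decreasing terms, hence `F ≥ 0`. The integrand is then the Gaussian moment
`x e^{-πλ(1+κ)x²}` with `κ = 2τF/(α-2) ≥ 0`, and `∫₀^∞ x e^{-a x²} dx = 1/(2a)` makes `λ`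
cancel. -/

theorem ascPochhammer_eval_mul_add_natCast {S : Type*} [CommSemiring S] (x : S) (n : ℕ) :
    (ascPochhammer S n).eval x * (x + n) = x * (ascPochhammer S n).eval (x + 1) := by
  rw [← ascPochhammer_succ_eval, ascPochhammer_succ_left]
  simp [Polynomial.eval_comp]

theorem hyp2F1_one_self_add_one {b : ℝ} (hb : 0 < b) (x : ℝ) :
    hyp2F1 1 b (b + 1) x = ∑' n : ℕ, b / (b + n) * x ^ n := by
  refine tsum_congr fun n ↦ ?_
  have hpoch : (ascPochhammer ℝ n).eval (b + 1) ≠ 0 := (ascPochhammer_pos n _ (by linarith)).ne'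
  have hbn : b + n ≠ 0 := by positivity
  rw [ascPochhammer_eval_one]
  field_simp
  linear_combination x ^ n * ascPochhammer_eval_mul_add_natCast b n

theorem div_add_natCast_mul_pow_antitone {b t : ℝ} (hb : 0 < b) (ht₀ : 0 ≤ t)
    (ht₁ : t ≤ 1) :
    Antitone fun n : ℕ ↦ b / (b + n) * t ^ n := by
  refine antitone_nat_of_succ_le fun n ↦ ?_
  push_cast
  refine mul_le_mul (div_le_div_of_nonneg_left hb.le (by positivity) (by linarith))
    (pow_le_pow_of_le_one ht₀ ht₁ n.le_succ) (by positivity) (by positivity)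

theorem summable_div_add_natCast_mul_pow {b x : ℝ} (hb : 0 < b) (hx : |x| < 1) :
    Summable fun n : ℕ ↦ b / (b + n) * x ^ n := by
  refine (summable_geometric_of_lt_one (abs_nonneg x) hx).of_norm_bounded fun n ↦ ?_
  rw [norm_mul, norm_pow, Real.norm_eq_abs, Real.norm_eq_abs,
    abs_of_pos (by positivity : 0 < b / (b + n))]
  refine mul_le_of_le_one_left (pow_nonneg (abs_nonneg x) n) ?_
  rw [div_le_one (by positivity)]
  linarith [n.cast_nonneg (α := ℝ)]

theorem not_summable_div_add_natCast_mul_pow {b x : ℝ} (hb : 0 < b) (hx : 1 ≤ |x|) :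
    ¬ Summable fun n : ℕ ↦ b / (b + n) * x ^ n := by
  intro h
  have hharmonic : Summable fun n : ℕ ↦ 1 / |n + b| ^ (1 : ℝ) := by
    refine (h.abs.mul_left b⁻¹).of_nonneg_of_le (fun n ↦ by positivity) fun n ↦ ?_
    rw [Real.rpow_one, abs_of_pos (by positivity), abs_mul, abs_pow,
      abs_of_pos (by positivity : 0 < b / (b + n)), ← mul_assoc, inv_mul_eq_div,
      div_div_cancel_left' hb.ne', one_div, add_comm]
    exact le_mul_of_one_le_right (by positivity) (one_le_pow₀ hx)
  exact absurd ((Real.summable_one_div_nat_add_rpow b 1).mp hharmonic) (lt_irrefl 1)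

theorem tsum_div_add_natCast_mul_pow_nonneg {b : ℝ} (hb : 0 < b) (x : ℝ) :
    0 ≤ ∑' n : ℕ, b / (b + n) * x ^ n := by
  rcases le_or_gt 0 x with hx | hx
  · exact tsum_nonneg fun n ↦ by positivity
  rcases le_or_gt x (-1) with hx₁ | hx₁
  -- for `x ≤ -1` the series is not summable and `tsum` takes its junk value `0`
  · refine (tsum_eq_zero_of_not_summable (not_summable_div_add_natCast_mul_pow hb ?_)).ge
    rw [abs_of_neg hx]
    linarith
  have hsum := summable_div_add_natCast_mul_pow hb (abs_lt.mpr ⟨hx₁, by linarith⟩)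
  have halternating : (fun n : ℕ ↦ b / (b + n) * x ^ n) =
      fun n : ℕ ↦ (-1) ^ n * (b / (b + n) * (-x) ^ n) := by
    ext n
    have hsq : ((-1 : ℝ)) ^ n * (-1) ^ n = 1 := by rw [← mul_pow]; norm_num
    rw [neg_pow]
    linear_combination -(b / (b + n) * x ^ n) * hsq
  rw [halternating] at hsum ⊢
  simpa using (div_add_natCast_mul_pow_antitone hb (by linarith) (by linarith))
    |>.alternating_series_le_tendsto hsum.hasSum.tendsto_sum_nat 0

theorem integral_Ioi_mul_exp_neg_mul_sq {a : ℝ} (ha : 0 < a) :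
    ∫ x in Set.Ioi (0 : ℝ), x * Real.exp (-a * x ^ 2) = (2 * a)⁻¹ := by
  have h := integral_mul_cexp_neg_mul_sq (b := (a : ℂ)) (by simpa using ha)
  apply Complex.ofReal_injective
  push_cast
  rw [← h, ← integral_complex_ofReal]
  push_cast
  rfl

theorem single_tier_coverage_closed_form (tau alpha lam : ℝ)
    (htau : 0 < tau) (ha : 2 < alpha) (hlam : 0 < lam) :
    let L : ℝ → ℝ := fun x =>
      Real.exp (-(2 * π * tau * lam * x ^ 2 / (alpha - 2)) *
        hyp2F1 1 (1 - 2 / alpha) (2 - 2 / alpha) (-tau))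
    2 * π * lam * ∫ x in Set.Ioi (0:ℝ), x * Real.exp (-π * lam * x ^ 2) * L x =
      1 / (1 + (2 * tau / (alpha - 2)) *
        hyp2F1 1 (1 - 2 / alpha) (2 - 2 / alpha) (-tau)) := by
  intro L
  set F := hyp2F1 1 (1 - 2 / alpha) (2 - 2 / alpha) (-tau) with hF
  have hb : 0 < 1 - 2 / alpha := by rw [sub_pos, div_lt_one (by linarith)]; exact ha
  have hF_nonneg : 0 ≤ F := by
    rw [hF, show 2 - 2 / alpha = (1 - 2 / alpha) + 1 by ring, hyp2F1_one_self_add_one hb]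
    exact tsum_div_add_natCast_mul_pow_nonneg hb _
  have hκ : 0 < 1 + 2 * tau / (alpha - 2) * F := by
    have : 0 ≤ 2 * tau / (alpha - 2) := div_nonneg (by positivity) (by linarith)
    linarith [mul_nonneg this hF_nonneg]
  have hintegrand : (fun x ↦ x * Real.exp (-π * lam * x ^ 2) * L x) =
      fun x ↦ x * Real.exp (-(π * lam * (1 + 2 * tau / (alpha - 2) * F)) * x ^ 2) := by
    ext x
    simp only [L, ← hF]
    rw [mul_assoc, ← Real.exp_add]
    ring_nf
  rw [hintegrand, integral_Ioi_mul_exp_neg_mul_sq (by positivity)]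
  field_simp
end
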